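/- Let R = (Σ, I, T) be a regular transition system where the transducer T has n_T states, and let V be a deterministic interpreter over Σ×Γ with n_V states. Then there exists an NFA over the alphabet Σ×Σ whose state type has cardinality at most n_V²·2^(n_T·n_V²) and which recognizes the complement of the potential reachability relation ⇝*_V, i.e., the set of equal-length pairs (u,w) such that there exists W ∈ Inductive(V) with u ⊨_V W and not w ⊨_V W. -/

import Mathlib

/-- A regular transition system: an NFA `I` over `Σ` for the initial
configurations and a transducer (an NFA over `Σ × Σ`) `T` for the transitions. -/
structure RTS (Sig QI QT : Type) where
  I : NFA Sig QI
  T : NFA (Sig × Sig) QT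

/-- `w ⇝ u`: the equal-length pair `(w,u)`, identified with the zipped word over
`Σ × Σ`, is accepted by the transducer. -/
def RTS.Step {Sig QI QT : Type} (R : RTS Sig QI QT) (w u : List Sig) : Prop :=
  w.length = u.length ∧ w.zip u ∈ R.T.accepts

/-- `Reach(R)`: configurations reachable from some initial configuration under the
reflexive-transitive closure of `⇝`. -/
def RTS.Reach {Sig QI QT : Type} (R : RTS Sig QI QT) : Set (List Sig) :=
  { w | ∃ u ∈ R.I.accepts, Relation.ReflTransGen R.Step u w }

/-- `w ⊨_V W`: the equal-length pair `(w, W)`, identified with the zipped word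
over `Σ × Γ`, is accepted by the deterministic interpreter `V`. -/
def Models {Sig Gam QV : Type} (V : DFA (Sig × Gam) QV) (w : List Sig)
    (W : List Gam) : Prop :=
  w.length = W.length ∧ w.zip W ∈ V.accepts

/-- A representation `W ∈ Γ*` is inductive if `u ⇝ w` and `u ⊨_V W` imply
`w ⊨_V W`. -/
def InductiveRep {Sig Gam QI QT QV : Type} (R : RTS Sig QI QT)
    (V : DFA (Sig × Gam) QV) (W : List Gam) : Prop :=
  ∀ u w : List Sig, R.Step u w → Models V u W → Models V w W

/-- `u ⇝*_V w`: every inductive representation satisfied by `u` is satisfied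
by `w`. -/
def PotReachV {Sig Gam QI QT QV : Type} (R : RTS Sig QI QT)
    (V : DFA (Sig × Gam) QV) (u w : List Sig) : Prop :=
  ∀ W : List Gam, InductiveRep R V W → Models V u W → Models V w W

/-- `Ind_V(R) = { w : u ⇝*_V w for some initial configuration u }`. -/
def IndV {Sig Gam QI QT QV : Type} (R : RTS Sig QI QT)
    (V : DFA (Sig × Gam) QV) : Set (List Sig) :=
  { w | ∃ u ∈ R.I.accepts, PotReachV R V u w }

/-!
A representation `W` is not inductive iff there are `u ⇝ w` with `u ⊨_V W` and not `w ⊨_V W`.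
Guessing `u` and `w` letter by letter while running `T` on `(u, w)` and `V` on `(u, W)` and
`(w, W)` gives an NFA over `Γ` with `n_T · n_V²` states for the non-inductive representations;
its subset construction decides inductiveness with `2^(n_T · n_V²)` states. Running that DFA
together with `V` on `(u, W)` and on `(w, W)`, while guessing `W` letter by letter, gives an NFA
for the complement of `⇝*_V`.
-/

namespace NFA

variable {α β σ σ₁ σ₂ : Type*}

def comap (f : α → β) (M : NFA β σ) : NFA α σ where
  step s a := M.step s (f a)
  start := M.start
  accept := M.accept

theorem evalFrom_comap (f : α → β) (M : NFA β σ) (S : Set σ) (x : List α) :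
    (M.comap f).evalFrom S x = M.evalFrom S (x.map f) := by
  induction x generalizing S with
  | nil => rfl
  | cons a x ih => exact ih _

theorem mem_accepts_comap (f : α → β) (M : NFA β σ) (x : List α) :
    x ∈ (M.comap f).accepts ↔ x.map f ∈ M.accepts := by
  simp only [mem_accepts, evalFrom_comap]
  rfl

def inter (M₁ : NFA α σ₁) (M₂ : NFA α σ₂) : NFA α (σ₁ × σ₂) where
  step s a := M₁.step s.1 a ×ˢ M₂.step s.2 a
  start := M₁.start ×ˢ M₂.start
  accept := M₁.accept ×ˢ M₂.accept

theorem stepSet_inter (M₁ : NFA α σ₁) (M₂ : NFA α σ₂) (S₁ : Set σ₁) (S₂ : Set σ₂) (a : α) :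
    (M₁.inter M₂).stepSet (S₁ ×ˢ S₂) a = M₁.stepSet S₁ a ×ˢ M₂.stepSet S₂ a := by
  ext ⟨t₁, t₂⟩
  simp only [mem_stepSet, Set.mem_prod, inter, Prod.exists]
  aesop

theorem evalFrom_inter (M₁ : NFA α σ₁) (M₂ : NFA α σ₂) (S₁ : Set σ₁) (S₂ : Set σ₂)
    (x : List α) :
    (M₁.inter M₂).evalFrom (S₁ ×ˢ S₂) x = M₁.evalFrom S₁ x ×ˢ M₂.evalFrom S₂ x := by
  induction x generalizing S₁ S₂ with
  | nil => rfl
  | cons a x ih => simp only [evalFrom_cons, stepSet_inter, ih]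

theorem accepts_inter (M₁ : NFA α σ₁) (M₂ : NFA α σ₂) :
    (M₁.inter M₂).accepts = M₁.accepts ⊓ M₂.accepts := by
  ext x
  simp only [Language.mem_inf, mem_accepts]
  rw [show (M₁.inter M₂).start = M₁.start ×ˢ M₂.start from rfl, evalFrom_inter]
  simp only [inter, Set.mem_prod, Prod.exists]
  constructor
  · rintro ⟨s₁, s₂, ⟨h₁, h₂⟩, e₁, e₂⟩
    exact ⟨⟨s₁, h₁, e₁⟩, s₂, h₂, e₂⟩
  · rintro ⟨⟨s₁, h₁, e₁⟩, s₂, h₂, e₂⟩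
    exact ⟨s₁, s₂, ⟨h₁, h₂⟩, e₁, e₂⟩

def map (f : α → β) (M : NFA α σ) : NFA β σ where
  step s b := {t | ∃ a, f a = b ∧ t ∈ M.step s a}
  start := M.start
  accept := M.accept

theorem mem_evalFrom_map (f : α → β) (M : NFA α σ) (S : Set σ) (y : List β) (t : σ) :
    t ∈ (M.map f).evalFrom S y ↔ ∃ x, x.map f = y ∧ t ∈ M.evalFrom S x := by
  induction y using List.reverseRecOn generalizing t with
  | nil => simp
  | append_singleton y b ih =>
    simp only [evalFrom_append, evalFrom_singleton, mem_stepSet, ih, List.map_eq_append_iff,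
      List.map_eq_singleton_iff]
    constructor
    · rintro ⟨s, ⟨x, rfl, hs⟩, a, rfl, ht⟩
      refine ⟨x ++ [a], ⟨x, [a], rfl, rfl, a, rfl, rfl⟩, ?_⟩
      simp only [evalFrom_append, evalFrom_singleton, mem_stepSet]
      exact ⟨s, hs, ht⟩
    · rintro ⟨_, ⟨x, _, rfl, rfl, a, rfl, rfl⟩, ht⟩
      simp only [evalFrom_append, evalFrom_singleton, mem_stepSet] at ht
      obtain ⟨s, hs, ht⟩ := ht
      exact ⟨s, ⟨x, rfl, hs⟩, a, rfl, ht⟩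

theorem mem_accepts_map (f : α → β) (M : NFA α σ) (y : List β) :
    y ∈ (M.map f).accepts ↔ ∃ x ∈ M.accepts, x.map f = y := by
  simp only [mem_accepts, mem_evalFrom_map]
  exact ⟨fun ⟨s, hs, x, hx, ht⟩ => ⟨x, ⟨s, hs, ht⟩, hx⟩,
    fun ⟨x, ⟨s, hs, ht⟩, hx⟩ => ⟨s, hs, x, hx, ht⟩⟩

theorem mem_accepts_map_fst (M : NFA (α × β) σ) (x : List α) :
    x ∈ (M.map Prod.fst).accepts ↔ ∃ y : List β, x.length = y.length ∧ x.zip y ∈ M.accepts := by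
  rw [mem_accepts_map]
  constructor
  · rintro ⟨z, hz, rfl⟩
    refine ⟨z.map Prod.snd, by simp, ?_⟩
    rwa [← List.unzip_fst, ← List.unzip_snd, List.zip_unzip]
  · rintro ⟨y, hxy, hz⟩
    exact ⟨_, hz, List.map_fst_zip hxy.le⟩

theorem mem_accepts_map_snd (M : NFA (α × β) σ) (y : List β) :
    y ∈ (M.map Prod.snd).accepts ↔ ∃ x : List α, x.length = y.length ∧ x.zip y ∈ M.accepts := by
  rw [mem_accepts_map]
  constructor
  · rintro ⟨z, hz, rfl⟩
    refine ⟨z.map Prod.fst, by simp, ?_⟩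
    rwa [← List.unzip_fst, ← List.unzip_snd, List.zip_unzip]
  · rintro ⟨x, hxy, hz⟩
    exact ⟨_, hz, List.map_snd_zip hxy.ge⟩

end NFA

theorem DFA.mem_accepts_comap {α β σ : Type*} (f : α → β) (M : DFA β σ) (x : List α) :
    x ∈ (M.comap f).accepts ↔ x.map f ∈ M.accepts := by
  rw [DFA.accepts_comap]
  rfl

section

variable {Sig Gam QI QT QV : Type} (R : RTS Sig QI QT) (V : DFA (Sig × Gam) QV)

-- A letter `((a, b), γ)` carries one position of each of the three tracks `u`, `w`, `W`.
def separatingDFA : DFA ((Sig × Sig) × Gam) (QV × QV) :=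
  (V.comap (Prod.map Prod.fst id)).inter (Vᶜ.comap (Prod.map Prod.snd id))

theorem zip_mem_separatingDFA_accepts {u w : List Sig}
    {W : List Gam} (huw : u.length = w.length) (huW : u.length = W.length) :
    (u.zip w).zip W ∈ (separatingDFA V).accepts ↔ Models V u W ∧ ¬ Models V w W := by
  simp only [separatingDFA, DFA.accepts_inter, Language.mem_inf, DFA.mem_accepts, DFA.eval_comap]
  rw [← List.zip_map_left, ← List.zip_map_left, List.map_fst_zip huw.le, List.map_snd_zip huw.ge]
  simp only [Models, huW, ← huw, true_and, DFA.mem_accepts]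
  rfl

def nonInductiveNFA : NFA Gam (QT × QV × QV) :=
  ((R.T.comap Prod.fst).inter (separatingDFA V).toNFA).map Prod.snd

theorem mem_nonInductiveNFA_accepts (W : List Gam) :
    W ∈ (nonInductiveNFA R V).accepts ↔ ¬ InductiveRep R V W := by
  have mem_iff {u w : List Sig} (huw : u.length = w.length) (huW : u.length = W.length) :
      (u.zip w).zip W ∈ ((R.T.comap Prod.fst).inter (separatingDFA V).toNFA).accepts ↔
        R.Step u w ∧ Models V u W ∧ ¬ Models V w W := by
    have hzip : ((u.zip w).zip W).map Prod.fst = u.zip w :=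
      List.map_fst_zip (by rw [List.length_zip]; omega)
    rw [NFA.accepts_inter, Language.mem_inf, NFA.mem_accepts_comap, DFA.toNFA_correct,
      zip_mem_separatingDFA_accepts V huw huW, hzip, RTS.Step]
    simp only [huw, true_and]
  simp only [InductiveRep, not_forall, exists_prop, nonInductiveNFA, NFA.mem_accepts_map_snd]
  constructor
  · rintro ⟨x, hxW, hx⟩
    rw [← List.zip_unzip x] at hxW hx
    have huw : x.unzip.1.length = x.unzip.2.length := by simp
    exact ⟨_, _, (mem_iff huw (by simpa [huw] using hxW)).1 hx⟩
  · rintro ⟨u, w, hstep, hu, hw⟩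
    exact ⟨u.zip w, by rw [List.length_zip, ← hstep.1, min_self, hu.1],
      (mem_iff hstep.1 hu.1).2 ⟨hstep, hu, hw⟩⟩

def complPotReachNFA : NFA (Sig × Sig) ((QV × QV) × Set (QT × QV × QV)) :=
  ((separatingDFA V).inter ((nonInductiveNFA R V).toDFAᶜ.comap Prod.snd)).toNFA.map Prod.fst

theorem zip_mem_complPotReachNFA_accepts {u w : List Sig} (huw : u.length = w.length) :
    u.zip w ∈ (complPotReachNFA R V).accepts ↔
      ∃ W : List Gam, InductiveRep R V W ∧ Models V u W ∧ ¬ Models V w W := by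
  rw [complPotReachNFA, NFA.mem_accepts_map_fst]
  refine exists_congr fun W => ?_
  rw [List.length_zip, ← huw, min_self, DFA.toNFA_correct, DFA.accepts_inter, Language.mem_inf,
    DFA.mem_accepts_comap, DFA.accepts_compl]
  constructor
  · rintro ⟨huW, hsep, hW⟩
    rw [List.map_snd_zip (by simp [← huw, huW]), NFA.toDFA_correct] at hW
    exact ⟨(mem_nonInductiveNFA_accepts R V W).not_left.1 hW,
      (zip_mem_separatingDFA_accepts V huw huW).1 hsep⟩
  · rintro ⟨hW, hu, hw⟩
    refine ⟨hu.1, (zip_mem_separatingDFA_accepts V huw hu.1).2 ⟨hu, hw⟩, ?_⟩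
    rw [List.map_snd_zip (by simp [← huw, hu.1]), NFA.toDFA_correct]
    exact (mem_nonInductiveNFA_accepts R V W).not_left.2 hW

end

theorem nfa_for_complement_potReach_general
    {Sig Gam QI QT QV : Type} [Fintype QT] [Fintype QV]
    (R : RTS Sig QI QT) (V : DFA (Sig × Gam) QV) :
    ∃ (Q : Type) (_ : Fintype Q) (D : NFA (Sig × Sig) Q),
      Fintype.card Q ≤
        Fintype.card QV ^ 2 * 2 ^ (Fintype.card QT * Fintype.card QV ^ 2) ∧
      ∀ u w : List Sig, u.length = w.length →
        (u.zip w ∈ D.accepts ↔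
          ∃ W : List Gam, InductiveRep R V W ∧ Models V u W ∧ ¬ Models V w W) := by
  refine ⟨_, inferInstance, complPotReachNFA R V, le_of_eq ?_,
    fun u w huw => zip_mem_complPotReachNFA_accepts R V huw⟩
  simp only [Fintype.card_prod, Fintype.card_set]
  ring

/-- Lemma `thm:regular-abstraction`: there is an NFA over `Σ × Σ`
with at most `n_V² · 2^(n_T · n_V²)` states recognizing the complement of the
potential reachability relation `⇝*_V`, i.e. the equal-length pairs `(u,w)` such
that some inductive representation `W` has `u ⊨_V W` but not `w ⊨_V W`. -/
theorem nfa_for_complement_potReach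
    {Sig Gam QI QT QV : Type} [Fintype Sig] [Fintype Gam]
    [Fintype QI] [Fintype QT] [Fintype QV]
    (R : RTS Sig QI QT) (V : DFA (Sig × Gam) QV) :
    ∃ (Q : Type) (_ : Fintype Q) (D : NFA (Sig × Sig) Q),
      Fintype.card Q ≤
        Fintype.card QV ^ 2 * 2 ^ (Fintype.card QT * Fintype.card QV ^ 2) ∧
      ∀ u w : List Sig, u.length = w.length →
        (u.zip w ∈ D.accepts ↔
          ∃ W : List Gam, InductiveRep R V W ∧ Models V u W ∧ ¬ Models V w W) :=
  nfa_for_complement_potReach_general R V
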